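/- arXiv:1112.3254 — 3 statements merged into one kernel-verified Lean document; each statement's English description precedes it below -/
import Mathlib

section
/- Let ⟨P,T⟩ be a VPT-representation of a finite simple graph G, and let q be a vertex of T with degree d_T(q) = h ≥ 4 in T. Assume there exist two neighbors y_1, y_2 of q in T such that no path P_v (v∈V(G)) contains both y_1 and y_2. Then there exists a VPT-representation ⟨P',T'⟩ of G whose host tree T' has vertex set V(T)∪{a_q} for a new vertex a_q ∉ V(T), and such that the degree of a_q in T' is 3, the degree of q in T' is h−1, and every other vertex x ∈ V(T')∖{q,a_q} has the same degree in T' as in T. -/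
open SimpleGraph

/-- `S` induces a path (a nonempty connected subgraph with maximum degree at most 2,
i.e. a subtree which is a path when `T` is a tree) in the graph `T`. -/
def IsPathSet {W : Type*} (T : SimpleGraph W) (S : Set W) : Prop :=
  S.Nonempty ∧
  (∀ x ∈ S, ∀ y ∈ S, ∃ p : T.Walk x y, ∀ z ∈ p.support, z ∈ S) ∧
  (∀ x ∈ S, (T.neighborSet x ∩ S).ncard ≤ 2)

/-- A VPT-representation of `G` on host tree `T`: a family of paths of the tree `T`,
one for each vertex of `G`, such that two distinct vertices of `G` are adjacent iff
the corresponding paths share a vertex. -/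
structure VPTRep {V W : Type*} (G : SimpleGraph V) (T : SimpleGraph W) where
  tree : T.IsTree
  path : V → Set W
  isPath : ∀ v, IsPathSet T (path v)
  adj_iff : ∀ u v : V, u ≠ v → (G.Adj u v ↔ (path u ∩ path v).Nonempty)

/-- `G` is a VPT graph: it has a VPT-representation on some finite host tree. -/
def IsVPT {V : Type*} (G : SimpleGraph V) : Prop :=
  ∃ (n : ℕ) (T : SimpleGraph (Fin n)), Nonempty (VPTRep G T)

/-- `G` belongs to the class [h,2,1]: it has a VPT-representation whose host tree has
maximum degree at most `h`. -/
def MemH21 {V : Type*} (G : SimpleGraph V) (h : ℕ) : Prop :=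
  ∃ (n : ℕ) (T : SimpleGraph (Fin n)) (_ : VPTRep G T),
    ∀ x : Fin n, (T.neighborSet x).ncard ≤ h

/-- `C` is a clique of `G`: a maximal set of pairwise adjacent vertices. -/
def IsMaxClique {V : Type*} (G : SimpleGraph V) (C : Set V) : Prop :=
  G.IsClique C ∧ ∀ D, G.IsClique D → C ⊆ D → D = C

/-- The branch graph `B(G/C)`, as a graph on the vertex set of `G`; its relevant
vertices are those of `branchVerts G C`, all others are isolated. -/
def branchGraph {V : Type*} (G : SimpleGraph V) (C : Set V) : SimpleGraph V where
  Adj v w := v ∉ C ∧ w ∉ C ∧ v ≠ w ∧ ¬ G.Adj v w ∧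
    (∃ u ∈ C, G.Adj u v ∧ G.Adj u w) ∧
    (∃ v' ∈ C, G.Adj v' v ∧ ¬ G.Adj v' w) ∧
    (∃ w' ∈ C, G.Adj w' w ∧ ¬ G.Adj w' v)
  symm := ⟨by
    rintro v w ⟨h1, h2, h3, h4, ⟨u, hu, hu1, hu2⟩, ⟨v', hv', hv1, hv2⟩, ⟨w', hw', hw1, hw2⟩⟩
    exact ⟨h2, h1, h3.symm, fun hadj => h4 hadj.symm, ⟨u, hu, hu2, hu1⟩,
      ⟨w', hw', hw1, hw2⟩, ⟨v', hv', hv1, hv2⟩⟩⟩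
  loopless := ⟨by rintro v ⟨_, _, h, _⟩; exact h rfl⟩

/-- The vertex set of the branch graph `B(G/C)`: vertices outside `C` adjacent to
some vertex of `C`. -/
def branchVerts {V : Type*} (G : SimpleGraph V) (C : Set V) : Set V :=
  {v | v ∉ C ∧ ∃ u ∈ C, G.Adj u v}

/-- `B` is a branch of `T` at `q`: a connected component of `T - q`, i.e. the set of
vertices reachable from some neighbor `y` of `q` by a walk avoiding `q`. -/
def BranchAt {W : Type*} (T : SimpleGraph W) (q : W) (B : Set W) : Prop :=
  ∃ y, T.Adj q y ∧ B = {x | ∃ p : T.Walk y x, q ∉ p.support}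

/-- `(S, K)` is a split partition of `G`: `S` is a stable set, `K` is a complete set,
and they partition the vertices. -/
def IsSplitPartition {V : Type*} (G : SimpleGraph V) (S K : Set V) : Prop :=
  (∀ v, v ∈ S ∨ v ∈ K) ∧ Disjoint S K ∧
  (∀ a ∈ S, ∀ b ∈ S, ¬ G.Adj a b) ∧ G.IsClique K

/-!
Split `q` into two adjacent vertices `q` and `a_q` (here `none`), moving the edges `q y₁` and
`q y₂` to `a_q`. Every edge of `T` either survives or is replaced by a path through `a_q`, so the new
graph is connected; it has one vertex and one edge more than `T`, hence it is again a tree.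
A path `P_v` is lifted by adding `a_q` exactly when `P_v` contains `q` and one of `y₁, y₂`. Because
`P_v` meets `{y₁, y₂}` at most once, `a_q` gets at most two neighbours on the lifted path, and the
map `a_q ↦ q` (or `a_q ↦ y_i` at the vertex `q`) shows that no other vertex gains any. Two lifted
paths can only meet at `a_q` if both contain `q`, so intersections are unchanged.
-/

namespace SimpleGraph

variable {W : Type*} (T : SimpleGraph W) (q : W) (A : Set W)

def splitVertex : SimpleGraph (Option W) where
  Adj
    | some a, some b => T.Adj a b ∧ ¬(a = q ∧ b ∈ A) ∧ ¬(b = q ∧ a ∈ A)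
    | none, some a | some a, none => a = q ∨ a ∈ A
    | none, none => False
  symm := ⟨by rintro (_ | a) (_ | b) <;> simp only <;> tauto⟩
  loopless := ⟨by rintro (_ | a) <;> simp⟩

def liftPathSet (S : Set W) : Set (Option W)
  | none => q ∈ S ∧ (A ∩ S).Nonempty
  | some x => x ∈ S

variable {T q A}

@[simp] lemma splitVertex_adj_some_some {a b : W} :
    (T.splitVertex q A).Adj (some a) (some b) ↔
      T.Adj a b ∧ ¬(a = q ∧ b ∈ A) ∧ ¬(b = q ∧ a ∈ A) := Iff.rfl

@[simp] lemma splitVertex_adj_none_some {a : W} :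
    (T.splitVertex q A).Adj none (some a) ↔ a = q ∨ a ∈ A := Iff.rfl

@[simp] lemma splitVertex_adj_some_none {a : W} :
    (T.splitVertex q A).Adj (some a) none ↔ a = q ∨ a ∈ A := Iff.rfl

lemma neighborSet_splitVertex_none :
    (T.splitVertex q A).neighborSet none = some '' insert q A := by
  ext (_ | a) <;> simp

lemma neighborSet_splitVertex_some_self (hA : A ⊆ T.neighborSet q) :
    (T.splitVertex q A).neighborSet (some q) = insert none (some '' (T.neighborSet q \ A)) := by
  ext (_ | a)
  · simp
  · have : a ∈ A → a ≠ q := fun ha => (hA ha).ne'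
    simp only [mem_neighborSet, splitVertex_adj_some_some, Set.mem_insert_iff, reduceCtorEq,
      Set.mem_image, Set.mem_sdiff, Option.some.injEq, exists_eq_right, false_or]
    grind

lemma injOn_getD_neighborSet_splitVertex {x : W} (hx : x ≠ q) :
    Set.InjOn (Option.getD · q) ((T.splitVertex q A).neighborSet (some x)) := by
  rintro (_ | a) ha (_ | b) hb hab <;> simp_all

lemma image_getD_neighborSet_splitVertex {x : W} (hx : x ≠ q) (hA : A ⊆ T.neighborSet q) :
    (Option.getD · q) '' (T.splitVertex q A).neighborSet (some x) = T.neighborSet x := by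
  ext z
  constructor
  · rintro ⟨_ | a, ha, rfl⟩
    · exact (hA ((show x = q ∨ x ∈ A from ha).resolve_left hx)).symm
    · exact ha.1
  · intro hz
    by_cases hmoved : z = q ∧ x ∈ A
    · exact ⟨none, Or.inr hmoved.2, hmoved.1.symm⟩
    · exact ⟨some z, ⟨hz, fun h => hx h.1, hmoved⟩, rfl⟩

lemma ncard_neighborSet_splitVertex_some {x : W} (hx : x ≠ q) (hA : A ⊆ T.neighborSet q) :
    ((T.splitVertex q A).neighborSet (some x)).ncard = (T.neighborSet x).ncard := by
  rw [← image_getD_neighborSet_splitVertex hx hA,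
    (injOn_getD_neighborSet_splitVertex hx).ncard_image]

lemma ncard_neighborSet_splitVertex_none [Finite W] (hA : A ⊆ T.neighborSet q) :
    ((T.splitVertex q A).neighborSet none).ncard = A.ncard + 1 := by
  rw [neighborSet_splitVertex_none, Set.ncard_image_of_injective _ (Option.some_injective _),
    Set.ncard_insert_of_notMem fun hq => (hA hq).ne rfl]

lemma ncard_neighborSet_splitVertex_some_self [Finite W] (hA : A ⊆ T.neighborSet q) :
    ((T.splitVertex q A).neighborSet (some q)).ncard + A.ncard = (T.neighborSet q).ncard + 1 := by
  rw [neighborSet_splitVertex_some_self hA, Set.ncard_insert_of_notMem (by simp),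
    Set.ncard_image_of_injective _ (Option.some_injective _), Set.ncard_sdiff hA]
  have := Set.ncard_le_ncard hA
  omega

@[simp] lemma mem_liftPathSet_some {S : Set W} {x : W} :
    some x ∈ liftPathSet q A S ↔ x ∈ S := Iff.rfl

lemma edgeSet_splitVertex :
    (T.splitVertex q A).edgeSet =
      Sym2.map some '' (T.edgeSet \ (fun a => s(q, a)) '' A) ∪
        (fun a => s(none, some a)) '' insert q A := by
  ext e
  induction e using Sym2.ind with
  | _ u v =>
  rcases u with _ | a <;> rcases v with _ | b
  case some.some =>
    simp only [mem_edgeSet, splitVertex_adj_some_some, Set.mem_union, Set.mem_image,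
      Set.mem_sdiff, Sym2.exists, Sym2.map_mk, Sym2.eq_iff, Option.some.injEq, reduceCtorEq,
      false_and, and_false, exists_false, or_false]
    constructor
    · rintro ⟨hab, h₁, h₂⟩
      exact ⟨a, b, ⟨hab, by grind⟩, .inl ⟨rfl, rfl⟩⟩
    · rintro ⟨x, y, ⟨hxy, h⟩, ⟨rfl, rfl⟩ | ⟨rfl, rfl⟩⟩
      · grind
      · exact ⟨hxy.symm, by grind⟩
  all_goals simp [Sym2.exists]

lemma ncard_edgeSet_splitVertex [Finite W] (hA : A ⊆ T.neighborSet q) :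
    (T.splitVertex q A).edgeSet.ncard = T.edgeSet.ncard + 1 := by
  have hq : q ∉ A := fun hq => (hA hq).ne rfl
  have hmoved : (fun a => s(q, a)) '' A ⊆ T.edgeSet := by
    rintro _ ⟨a, ha, rfl⟩
    exact hA ha
  have hdisj : Disjoint (Sym2.map some '' (T.edgeSet \ (fun a => s(q, a)) '' A))
      ((fun a => s(none, some a)) '' insert q A) := by
    refine Set.disjoint_left.mpr ?_
    rintro _ ⟨e, -, rfl⟩ ⟨a, -, he⟩
    have : none ∈ Sym2.map some e := he ▸ Sym2.mem_mk_left _ _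
    simp [Sym2.mem_map] at this
  rw [edgeSet_splitVertex, Set.ncard_union_eq hdisj,
    Set.ncard_image_of_injective _ (Sym2.map.injective (Option.some_injective _)),
    Set.ncard_sdiff hmoved, Set.ncard_image_of_injective _ fun a b h => Sym2.congr_right.mp h,
    Set.ncard_image_of_injective _ fun a b h => Option.some_injective _ (Sym2.congr_right.mp h),
    Set.ncard_insert_of_notMem hq]
  have := Set.ncard_le_ncard hmoved
  rw [Set.ncard_image_of_injective _ fun a b h => Sym2.congr_right.mp h] at this
  omega

lemma exists_splitVertex_walk {S : Set W} {a b : W} (p : T.Walk a b)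
    (hp : ∀ z ∈ p.support, z ∈ S) :
    ∃ p' : (T.splitVertex q A).Walk (some a) (some b), ∀ z ∈ p'.support, z ∈ liftPathSet q A S := by
  induction p with
  | nil => exact ⟨.nil, by simpa using hp⟩
  | @cons a c b hac p ih =>
    have ha : a ∈ S := hp a (by simp)
    have hc : c ∈ S := hp c (by simp)
    obtain ⟨p', hp'⟩ := ih fun z hz => hp z (by simp [hz])
    by_cases hmoved : (a = q ∧ c ∈ A) ∨ (c = q ∧ a ∈ A)
    · have hnone : none ∈ liftPathSet q A S := by
        rcases hmoved with ⟨rfl, hcA⟩ | ⟨rfl, haA⟩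
        exacts [⟨ha, c, hcA, hc⟩, ⟨hc, a, haA, ha⟩]
      refine ⟨.cons (v := none) (splitVertex_adj_some_none.mpr (by tauto))
        (.cons (splitVertex_adj_none_some.mpr (by tauto)) p'), ?_⟩
      simp only [Walk.support_cons, List.mem_cons]
      rintro z (rfl | rfl | hz)
      exacts [ha, hnone, hp' z hz]
    · refine ⟨.cons (splitVertex_adj_some_some.mpr ⟨hac, by tauto⟩) p', ?_⟩
      simp only [Walk.support_cons, List.mem_cons]
      rintro z (rfl | hz)
      exacts [ha, hp' z hz]

lemma Connected.splitVertex (hT : T.Connected) : (T.splitVertex q A).Connected := by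
  have hsome : ∀ a b : W, (T.splitVertex q A).Reachable (some a) (some b) := fun a b =>
    (exists_splitVertex_walk (S := Set.univ) (hT.preconnected a b).some (by simp)).choose.reachable
  have hnone : (T.splitVertex q A).Reachable none (some q) := Adj.reachable (by simp)
  refine (connected_iff_exists_forall_reachable _).mpr ⟨some q, ?_⟩
  rintro (_ | b)
  exacts [hnone.symm, hsome q b]

lemma IsTree.splitVertex [Finite W] (hT : T.IsTree) (hA : A ⊆ T.neighborSet q) :
    (T.splitVertex q A).IsTree := by
  rw [isTree_iff_connected_and_card] at hT ⊢
  refine ⟨hT.1.splitVertex, ?_⟩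
  rw [Finite.card_option, ← hT.2, Nat.card_coe_set_eq, Nat.card_coe_set_eq,
    ncard_edgeSet_splitVertex hA]

lemma liftPathSet_inter_nonempty_iff {S S' : Set W} :
    (liftPathSet q A S ∩ liftPathSet q A S').Nonempty ↔ (S ∩ S').Nonempty := by
  constructor
  · rintro ⟨_ | x, h, h'⟩
    exacts [⟨q, h.1, h'.1⟩, ⟨x, h, h'⟩]
  · rintro ⟨x, h, h'⟩
    exact ⟨some x, h, h'⟩

lemma IsPathSet.liftPathSet_connected {S : Set W} (hS : IsPathSet T S) :
    ∀ x ∈ liftPathSet q A S, ∀ y ∈ liftPathSet q A S,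
      ∃ p : (T.splitVertex q A).Walk x y, ∀ z ∈ p.support, z ∈ liftPathSet q A S := by
  have hsome : ∀ a ∈ S, ∀ b ∈ S, ∃ p : (T.splitVertex q A).Walk (some a) (some b),
      ∀ z ∈ p.support, z ∈ liftPathSet q A S := fun a ha b hb =>
    have ⟨p, hp⟩ := hS.2.1 a ha b hb
    exists_splitVertex_walk p hp
  have hnone : none ∈ liftPathSet q A S → ∀ b ∈ S, ∃ p : (T.splitVertex q A).Walk none (some b),
      ∀ z ∈ p.support, z ∈ liftPathSet q A S := fun hn b hb =>
    have ⟨p, hp⟩ := hsome q hn.1 b hb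
    ⟨.cons (splitVertex_adj_none_some.mpr (.inl rfl)) p, by simpa [hn] using hp⟩
  rintro (_ | a) ha (_ | b) hb
  · exact ⟨.nil, by simpa using ha⟩
  · exact hnone ha b hb
  · have ⟨p, hp⟩ := hnone hb a ha
    exact ⟨p.reverse, by simpa using hp⟩
  · exact hsome a ha b hb

lemma ncard_neighborSet_splitVertex_none_inter_liftPathSet_le [Finite W] {S : Set W}
    (hAS : (A ∩ S).Subsingleton) :
    ((T.splitVertex q A).neighborSet none ∩ liftPathSet q A S).ncard ≤ 2 := by
  have hsub : (T.splitVertex q A).neighborSet none ∩ liftPathSet q A S ⊆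
      some '' insert q (A ∩ S) := by
    rw [neighborSet_splitVertex_none]
    rintro _ ⟨⟨a, ha, rfl⟩, haS⟩
    exact ⟨a, ha.imp id fun ha => ⟨ha, haS⟩, rfl⟩
  calc _ ≤ (some '' insert q (A ∩ S)).ncard := Set.ncard_le_ncard hsub
    _ ≤ (A ∩ S).ncard + 1 := by
        rw [Set.ncard_image_of_injective _ (Option.some_injective _)]
        exact Set.ncard_insert_le _ _
    _ ≤ 2 := by have := Set.ncard_le_one_iff_subsingleton.mpr hAS; omega

lemma ncard_neighborSet_splitVertex_some_inter_liftPathSet_le [Finite W] {S : Set W}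
    (hA : A ⊆ T.neighborSet q) (x : W) :
    ((T.splitVertex q A).neighborSet (some x) ∩ liftPathSet q A S).ncard ≤
      (T.neighborSet x ∩ S).ncard := by
  by_cases hxq : x = q
  · subst hxq
    by_cases hnone : none ∈ liftPathSet x A S
    · obtain ⟨a, haA, haS⟩ := hnone.2
      refine Set.ncard_le_ncard_of_injOn (Option.getD · a) ?_ ?_
      · rintro (_ | z) ⟨hz, hzS⟩
        exacts [⟨hA haA, haS⟩, ⟨hz.1, hzS⟩]
      · rintro (_ | b) ⟨hb, -⟩ (_ | c) ⟨hc, -⟩ hbc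
        · rfl
        · obtain rfl : a = c := hbc
          exact absurd hc fun h => h.2.1 ⟨rfl, haA⟩
        · obtain rfl : b = a := hbc
          exact absurd hb fun h => h.2.1 ⟨rfl, haA⟩
        · exact congrArg some hbc
    · refine Set.ncard_le_ncard_of_injOn (Option.getD · x) ?_ ?_
      · rintro (_ | z) ⟨hz, hzS⟩
        exacts [absurd hzS hnone, ⟨hz.1, hzS⟩]
      · rintro (_ | b) ⟨-, hb⟩ (_ | c) ⟨-, hc⟩ hbc
        · rfl
        · exact absurd hb hnone
        · exact absurd hc hnone
        · exact congrArg some hbc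
  · refine Set.ncard_le_ncard_of_injOn (Option.getD · q) ?_
      ((injOn_getD_neighborSet_splitVertex hxq).mono Set.inter_subset_left)
    rintro z ⟨hz, hzS⟩
    refine ⟨image_getD_neighborSet_splitVertex hxq hA ▸ Set.mem_image_of_mem _ hz, ?_⟩
    rcases z with _ | z
    exacts [hzS.1, hzS]

lemma IsPathSet.liftPathSet [Finite W] {S : Set W} (hS : IsPathSet T S) (hA : A ⊆ T.neighborSet q)
    (hAS : (A ∩ S).Subsingleton) : IsPathSet (T.splitVertex q A) (liftPathSet q A S) :=
  ⟨hS.1.elim fun x hx => ⟨some x, hx⟩, hS.liftPathSet_connected, by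
    rintro (_ | x) hx
    exacts [ncard_neighborSet_splitVertex_none_inter_liftPathSet_le hAS,
      (ncard_neighborSet_splitVertex_some_inter_liftPathSet_le hA x).trans (hS.2.2 x hx)]⟩

end SimpleGraph

def VPTRep.splitVertex {V W : Type*} [Finite W] {G : SimpleGraph V} {T : SimpleGraph W}
    (rep : VPTRep G T) {q : W} {A : Set W} (hA : A ⊆ T.neighborSet q)
    (hAS : ∀ v, (A ∩ rep.path v).Subsingleton) : VPTRep G (T.splitVertex q A) where
  tree := rep.tree.splitVertex hA
  path v := liftPathSet q A (rep.path v)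
  isPath v := (rep.isPath v).liftPathSet hA (hAS v)
  adj_iff u v huv := (rep.adj_iff u v huv).trans liftPathSet_inter_nonempty_iff.symm

theorem stmt2_general {V : Type} {n : ℕ} (G : SimpleGraph V) (T : SimpleGraph (Fin n))
    (rep : VPTRep G T) (q : Fin n) (h : ℕ)
    (hdeg : (T.neighborSet q).ncard = h)
    (y₁ y₂ : Fin n) (hy : y₁ ≠ y₂) (hy₁ : T.Adj q y₁) (hy₂ : T.Adj q y₂)
    (hno : ∀ v : V, ¬ ({y₁, y₂} ⊆ rep.path v)) :
    ∃ (T' : SimpleGraph (Option (Fin n))) (_ : VPTRep G T'),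
      (T'.neighborSet none).ncard = 3 ∧
      (T'.neighborSet (some q)).ncard = h - 1 ∧
      (∀ x : Fin n, x ≠ q → (T'.neighborSet (some x)).ncard = (T.neighborSet x).ncard) := by
  have hA : {y₁, y₂} ⊆ T.neighborSet q := Set.pair_subset hy₁ hy₂
  have hAS (v : V) : ({y₁, y₂} ∩ rep.path v).Subsingleton := by
    rintro a ⟨ha, haS⟩ b ⟨hb, hbS⟩
    by_contra hab
    simp only [Set.mem_insert_iff, Set.mem_singleton_iff] at ha hb
    rcases ha with rfl | rfl <;> rcases hb with rfl | rfl
    exacts [hab rfl, hno v (Set.pair_subset haS hbS), hno v (Set.pair_subset hbS haS), hab rfl]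
  have hcard : ({y₁, y₂} : Set (Fin n)).ncard = 2 := Set.ncard_pair hy
  refine ⟨T.splitVertex q {y₁, y₂}, rep.splitVertex hA hAS, ?_, ?_,
    fun x hx => ncard_neighborSet_splitVertex_some hx hA⟩
  · rw [ncard_neighborSet_splitVertex_none hA, hcard]
  · have := ncard_neighborSet_splitVertex_some_self hA
    omega

/-- If `⟨P,T⟩` is a VPT-representation of `G`, `q` has degree `h ≥ 4` in `T`,
and there are two neighbors `y₁ ≠ y₂` of `q` such that no path of the representation
contains both, then `G` has a VPT-representation on a tree `T'` whose vertex set is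
`V(T) ∪ {a_q}` (modelled as `Option (Fin n)` with `a_q = none`) with
`d_{T'}(a_q) = 3`, `d_{T'}(q) = h - 1`, and all other degrees unchanged. -/
theorem stmt2 {V : Type} [Fintype V] {n : ℕ} (G : SimpleGraph V) (T : SimpleGraph (Fin n))
    (rep : VPTRep G T) (q : Fin n) (h : ℕ) (hh : 4 ≤ h)
    (hdeg : (T.neighborSet q).ncard = h)
    (y₁ y₂ : Fin n) (hy : y₁ ≠ y₂) (hy₁ : T.Adj q y₁) (hy₂ : T.Adj q y₂)
    (hno : ∀ v : V, ¬ ({y₁, y₂} ⊆ rep.path v)) :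
    ∃ (T' : SimpleGraph (Option (Fin n))) (_ : VPTRep G T'),
      (T'.neighborSet none).ncard = 3 ∧
      (T'.neighborSet (some q)).ncard = h - 1 ∧
      (∀ x : Fin n, x ≠ q → (T'.neighborSet (some x)).ncard = (T.neighborSet x).ncard) :=
  stmt2_general G T rep q h hdeg y₁ y₂ hy hy₁ hy₂ hno
end

section
/- Let G be a finite simple graph with a VPT-representation ⟨P,T⟩. For every clique C of G there exists a vertex q of T such that C = C_q, i.e., C = {v∈V(G) : q∈V(P_v)}. -/
/-! Paths of a tree are subtrees, and subtrees of a tree have the Helly property: for three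
pairwise intersecting subtrees, the median of three witnesses of the pairwise intersections lies
in all three, and induction on the number of subtrees does the rest. So the paths of the vertices
of a clique `C` share a vertex `q`; then `C_q` is a clique containing `C`, hence equal to it by
maximality. -/

open SimpleGraph

namespace SimpleGraph

variable {W : Type*} {T : SimpleGraph W}

/-- In a tree, these are exactly the vertex sets of subtrees, together with `∅`. -/
def IsPathConvex (T : SimpleGraph W) (S : Set W) : Prop :=
  ∀ ⦃x y : W⦄ (p : T.Walk x y), p.IsPath → x ∈ S → y ∈ S → ∀ z ∈ p.support, z ∈ S

theorem IsPathConvex.inter {S S' : Set W} (hS : T.IsPathConvex S) (hS' : T.IsPathConvex S') :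
    T.IsPathConvex (S ∩ S') :=
  fun _ _ p hp hx hy z hz => ⟨hS p hp hx.1 hy.1 z hz, hS' p hp hx.2 hy.2 z hz⟩

theorem IsAcyclic.isPathConvex (hT : T.IsAcyclic) {S : Set W}
    (hS : ∀ x ∈ S, ∀ y ∈ S, ∃ p : T.Walk x y, ∀ z ∈ p.support, z ∈ S) : T.IsPathConvex S := by
  classical
  intro x y p hp hx hy z hz
  obtain ⟨w, hw⟩ := hS x hx y hy
  have hpw : p = w.bypass :=
    Subtype.mk.inj <| (hT.subsingleton_path x y).elim ⟨p, hp⟩ ⟨_, w.bypass_isPath⟩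
  exact hw z (w.support_bypass_subset_support (hpw ▸ hz))

theorem IsAcyclic.exists_median (hT : T.IsAcyclic) {x y z : W} (p : T.Walk x y) (hp : p.IsPath)
    (q : T.Walk y z) (r : T.Walk x z) (hr : r.IsPath) :
    ∃ m ∈ p.support, m ∈ q.support ∧ m ∈ r.support := by
  classical
  induction p with
  | nil => exact ⟨_, Walk.start_mem_support _, q.start_mem_support, r.start_mem_support⟩
  | @cons x x' y hxx' p ih =>
    by_cases hxq : x ∈ q.support
    · exact ⟨x, Walk.start_mem_support _, hxq, r.start_mem_support⟩
    have hxp : x ∉ p.support := ((Walk.cons_isPath_iff hxx' p).mp hp).2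
    set r' := (p.append q).bypass
    obtain ⟨m, hmp, hmq, hmr'⟩ := ih hp.of_cons q r' (p.append q).bypass_isPath
    -- `r` is forced to be `x` followed by the path `r'` from `x'`, which avoids `x`
    have hxr' : x ∉ r'.support := fun hx => by
      rcases (Walk.mem_support_append_iff ..).mp ((p.append q).support_bypass_subset_support hx)
        with hx | hx
      exacts [hxp hx, hxq hx]
    have hr_eq : r = .cons hxx' r' :=
      Subtype.mk.inj <| (hT.subsingleton_path _ z).elim ⟨r, hr⟩
        ⟨_, (Walk.cons_isPath_iff hxx' r').mpr ⟨(p.append q).bypass_isPath, hxr'⟩⟩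
    exact ⟨m, Walk.support_cons .. ▸ List.mem_cons_of_mem _ hmp, hmq,
      hr_eq ▸ Walk.support_cons .. ▸ List.mem_cons_of_mem _ hmr'⟩

theorem IsTree.inter_inter_nonempty (hT : T.IsTree) {A B C : Set W} (hA : T.IsPathConvex A)
    (hB : T.IsPathConvex B) (hC : T.IsPathConvex C) (hAB : (A ∩ B).Nonempty)
    (hBC : (B ∩ C).Nonempty) (hAC : (A ∩ C).Nonempty) : (A ∩ B ∩ C).Nonempty := by
  classical
  obtain ⟨x, hxA, hxB⟩ := hAB
  obtain ⟨y, hyB, hyC⟩ := hBC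
  obtain ⟨z, hzA, hzC⟩ := hAC
  let p := (hT.connected x y).some.toPath
  let q := (hT.connected y z).some.toPath
  let r := (hT.connected x z).some.toPath
  obtain ⟨m, hmp, hmq, hmr⟩ := hT.isAcyclic.exists_median p.1 p.2 q.1 r.1 r.2
  exact ⟨m, ⟨hA r.1 r.2 hxA hzA m hmr, hB p.1 p.2 hxB hyB m hmp⟩, hC q.1 q.2 hyC hzC m hmq⟩

theorem IsTree.helly_theorem (hT : T.IsTree) {ι : Type*} {f : ι → Set W} {s : Finset ι}
    (hconv : ∀ i ∈ s, T.IsPathConvex (f i)) (hinter : ∀ i ∈ s, ∀ j ∈ s, (f i ∩ f j).Nonempty) :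
    ∃ q, ∀ i ∈ s, q ∈ f i := by
  rcases s.eq_empty_or_nonempty with rfl | hs
  · exact ⟨hT.connected.nonempty.some, by simp⟩
  induction hs using Finset.Nonempty.cons_induction generalizing f with
  | singleton a =>
    obtain ⟨q, hq, -⟩ := hinter a (by simp) a (by simp)
    exact ⟨q, by simpa using hq⟩
  | cons a s _ hs ih =>
    simp only [Finset.mem_cons, forall_eq_or_imp] at hconv hinter
    obtain ⟨q, hq⟩ := ih (f := fun i => f i ∩ f a)
      (fun i hi => (hconv.2 i hi).inter hconv.1)
      (fun i hi j hj => (hT.inter_inter_nonempty (hconv.2 i hi) (hconv.2 j hj) hconv.1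
          ((hinter.2 i hi).2 j hj) (hinter.2 j hj).1 (hinter.2 i hi).1).mono
        fun _ hw => ⟨⟨hw.1.1, hw.2⟩, hw.1.2, hw.2⟩)
    exact ⟨q, by simpa [Finset.mem_cons, forall_eq_or_imp] using
      ⟨(hq _ hs.choose_spec).2, fun i hi => (hq i hi).1⟩⟩

end SimpleGraph

namespace VPTRep

variable {V W : Type*} {G : SimpleGraph V} {T : SimpleGraph W}

theorem isPathConvex_path (rep : VPTRep G T) (v : V) : T.IsPathConvex (rep.path v) :=
  rep.tree.isAcyclic.isPathConvex (rep.isPath v).2.1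

theorem path_inter_nonempty_of_isClique (rep : VPTRep G T) {C : Set V} (hC : G.IsClique C)
    {u v : V} (hu : u ∈ C) (hv : v ∈ C) : (rep.path u ∩ rep.path v).Nonempty := by
  obtain rfl | huv := eq_or_ne u v
  · simpa using (rep.isPath u).1
  · exact (rep.adj_iff u v huv).mp (hC hu hv huv)

theorem isClique_setOf_mem_path (rep : VPTRep G T) (q : W) :
    G.IsClique {v | q ∈ rep.path v} :=
  fun u hu v hv huv => (rep.adj_iff u v huv).mpr ⟨q, hu, hv⟩

end VPTRep

/-- In a VPT-representation `⟨P,T⟩` of `G`, for every clique `C` of `G`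
there is a vertex `q` of `T` with `C = C_q = {v : q ∈ P_v}`. -/
theorem stmt3 {V : Type} [Fintype V] {n : ℕ} (G : SimpleGraph V) (T : SimpleGraph (Fin n))
    (rep : VPTRep G T) (C : Set V) (hC : IsMaxClique G C) :
    ∃ q : Fin n, C = {v : V | q ∈ rep.path v} := by
  obtain ⟨q, hq⟩ := rep.tree.helly_theorem (f := rep.path) (s := C.toFinite.toFinset)
    (fun v _ => rep.isPathConvex_path v)
    (fun u hu v hv => rep.path_inter_nonempty_of_isClique hC.1
      (C.toFinite.mem_toFinset.mp hu) (C.toFinite.mem_toFinset.mp hv))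
  exact ⟨q, (hC.2 _ (rep.isClique_setOf_mem_path q)
    fun v hv => hq v (C.toFinite.mem_toFinset.mpr hv)).symm⟩
end

section
/- Let G be a finite connected simple graph with vertex set {v_1,…,v_n}, and let Ĝ be the split VPT graph constructed from G as follows: the host tree T is a star with center q and leaves y_1,…,y_n; the path family consists of a one-vertex path P_i = {y_i} for each 1≤i≤n, a path P_{ij} = {y_i,q,y_j} for each pair i<j with v_iv_j∈E(G), and a path P_{iq} = {q,y_i} for each i with d_G(v_i)=1; Ĝ is the vertex intersection graph of this path family. Then Ĝ is a split graph whose stable part consists of the n one-vertex paths P_i, whose central clique consists of all remaining paths (those containing q), and no stable vertex of Ĝ is dominated (i.e., for no i≠j does N(P_i) ⊆ N(P_j) hold in Ĝ). -/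
open SimpleGraph

/-- The vertex intersection graph of a family of sets `f`. -/
def interGraph {I W : Type*} (f : I → Set W) : SimpleGraph I where
  Adj u v := u ≠ v ∧ (f u ∩ f v).Nonempty
  symm := ⟨by
    rintro u v ⟨h1, h2⟩
    exact ⟨h1.symm, by rwa [Set.inter_comm]⟩⟩
  loopless := ⟨by rintro u ⟨h, _⟩; exact h rfl⟩

/-- Index type for the path family of the graph `Ĝ` built from `G`:
`Sum.inl i` is the one-vertex path `Pᵢ = {yᵢ}`; `Sum.inr (Sum.inl ⟨(i,j),_⟩)` is the
path `Pᵢⱼ = {yᵢ, q, yⱼ}` for an edge `vᵢvⱼ` with `i < j`; `Sum.inr (Sum.inr ⟨i,_⟩)` is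
the path `P_{iq} = {q, yᵢ}` for a vertex `vᵢ` of degree 1. -/
abbrev HatIdx (n : ℕ) (G : SimpleGraph (Fin n)) : Type :=
  Fin n ⊕ ({p : Fin n × Fin n // p.1 < p.2 ∧ G.Adj p.1 p.2} ⊕
    {i : Fin n // (G.neighborSet i).ncard = 1})

/-- The path family on the star host tree: the tree has center `q = none` and
leaves `yᵢ = some i`. -/
def hatPath (n : ℕ) (G : SimpleGraph (Fin n)) : HatIdx n G → Set (Option (Fin n))
  | Sum.inl i => {some i}
  | Sum.inr (Sum.inl p) => {some p.1.1, none, some p.1.2}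
  | Sum.inr (Sum.inr i) => {none, some i.1}

/-- The graph `Ĝ` built from `G`: the vertex intersection graph of the above path
family in the star tree. -/
def hatG (n : ℕ) (G : SimpleGraph (Fin n)) : SimpleGraph (HatIdx n G) :=
  interGraph (hatPath n G)

/-- The central clique `C_q` of `Ĝ`: all paths containing the center `q = none`. -/
def hatCq (n : ℕ) (G : SimpleGraph (Fin n)) : Set (HatIdx n G) :=
  {u | none ∈ hatPath n G u}

lemma interGraph_adj_of_eq_singleton {I W : Type*} {f : I → Set W} {a : I} {x : W}
    (ha : f a = {x}) (u : I) : (interGraph f).Adj a u ↔ u ≠ a ∧ x ∈ f u := by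
  simp [interGraph, ha, Set.singleton_inter_nonempty, ne_comm]

lemma interGraph_isClique_of_forall_mem {I W : Type*} {f : I → Set W} {K : Set I} {x : W}
    (hK : ∀ u ∈ K, x ∈ f u) : (interGraph f).IsClique K :=
  fun _ hu _ hv hne => ⟨hne, x, hK _ hu, hK _ hv⟩

lemma interGraph_isAntichain_of_eq_singleton {I W : Type*} {f : I → Set W} {S : Set I}
    (hinj : S.InjOn f) (hS : ∀ a ∈ S, ∃ x, f a = {x}) :
    ∀ a ∈ S, ∀ b ∈ S, ¬ (interGraph f).Adj a b := by
  rintro a ha b hb ⟨hne, hab⟩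
  obtain ⟨x, hx⟩ := hS a ha
  obtain ⟨y, hy⟩ := hS b hb
  rw [hx, hy, Set.singleton_inter_nonempty, Set.mem_singleton_iff] at hab
  exact hne (hinj ha hb (by rw [hx, hy, hab]))

lemma SimpleGraph.Preconnected.exists_adj_ne {V : Type*} {G : SimpleGraph V}
    (hG : G.Preconnected) {i j : V} (hij : i ≠ j) (hdeg : (G.neighborSet i).ncard ≠ 1) :
    ∃ k, G.Adj i k ∧ k ≠ j := by
  by_contra! hk
  obtain ⟨p⟩ := hG i j
  have hp := Walk.not_nil_of_ne (p := p) hij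
  have hnbr : G.neighborSet i = {j} :=
    Set.eq_singleton_iff_unique_mem.2 ⟨by simpa [hk _ (p.adj_snd hp)] using p.adj_snd hp, hk⟩
  exact hdeg (by rw [hnbr, Set.ncard_singleton])

section hatG

variable {n : ℕ} {G : SimpleGraph (Fin n)}

lemma inl_not_mem_hatCq (i : Fin n) : Sum.inl i ∉ hatCq n G := by
  simp [hatCq, hatPath]

lemma mem_hatCq_of_ne_inl {u : HatIdx n G} (hu : u ∉ Set.range Sum.inl) : u ∈ hatCq n G := by
  rcases u with i | p | i
  · exact absurd ⟨i, rfl⟩ hu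
  all_goals simp [hatCq, hatPath]

lemma exists_hatPath_eq_of_adj {i k : Fin n} (h : G.Adj i k) :
    ∃ u, hatPath n G u = {some i, none, some k} := by
  rcases lt_or_gt_of_ne h.ne with hlt | hgt
  · exact ⟨Sum.inr (Sum.inl ⟨(i, k), hlt, h⟩), rfl⟩
  · refine ⟨Sum.inr (Sum.inl ⟨(k, i), hgt, h.symm⟩), ?_⟩
    simp only [hatPath]
    rw [Set.insert_comm, Set.pair_comm (some k), Set.insert_comm]

/-- The path through `yᵢ` witnessing that `Pᵢ` is not dominated by `Pⱼ`: `P_{iq}` when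
`vᵢ` is a leaf, otherwise `P_{ik}` for a neighbour `vₖ ≠ vⱼ` of `vᵢ`. -/
lemma exists_hatCq_mem_not_mem (hG : G.Preconnected) {i j : Fin n} (hij : i ≠ j) :
    ∃ u ∈ hatCq n G, some i ∈ hatPath n G u ∧ some j ∉ hatPath n G u := by
  by_cases hdeg : (G.neighborSet i).ncard = 1
  · exact ⟨Sum.inr (Sum.inr ⟨i, hdeg⟩), by simp [hatCq, hatPath], by simp [hatPath],
      by simpa [hatPath] using hij.symm⟩
  · obtain ⟨k, hik, hkj⟩ := hG.exists_adj_ne hij hdeg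
    obtain ⟨u, hu⟩ := exists_hatPath_eq_of_adj hik
    exact ⟨u, by simp [hatCq, hu], by simp [hu], by simpa [hu] using ⟨hij.symm, hkj.symm⟩⟩

lemma hatG_isSplitPartition :
    IsSplitPartition (hatG n G) (Set.range Sum.inl) (hatCq n G) := by
  refine ⟨fun u => or_iff_not_imp_left.2 mem_hatCq_of_ne_inl, ?_, ?_,
    interGraph_isClique_of_forall_mem fun _ hu => hu⟩
  · rw [Set.disjoint_left]
    rintro _ ⟨i, rfl⟩
    exact inl_not_mem_hatCq i
  · refine interGraph_isAntichain_of_eq_singleton ?_ (by rintro _ ⟨i, rfl⟩; exact ⟨_, rfl⟩)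
    rintro _ ⟨i, rfl⟩ _ ⟨j, rfl⟩ h
    simpa [hatPath] using h

lemma hatG_neighborSet_inl_not_subset (hG : G.Preconnected) {i j : Fin n} (hij : i ≠ j) :
    ¬ (hatG n G).neighborSet (Sum.inl i) ⊆ (hatG n G).neighborSet (Sum.inl j) := by
  obtain ⟨u, hu, hi, hj⟩ := exists_hatCq_mem_not_mem hG hij
  have hadj_iff (l : Fin n) :
      (hatG n G).Adj (Sum.inl l) u ↔ u ≠ Sum.inl l ∧ some l ∈ hatPath n G u :=
    interGraph_adj_of_eq_singleton (f := hatPath n G) rfl u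
  have hne : u ≠ Sum.inl i := by
    rintro rfl
    exact inl_not_mem_hatCq i hu
  exact fun hsub => hj ((hadj_iff j).1 (hsub ((hadj_iff i).2 ⟨hne, hi⟩))).2

end hatG

/-- The constructed graph `Ĝ = hatG n G` is a split graph whose stable
part is the set of one-vertex paths `Pᵢ` and whose central clique is the set of the
remaining paths (those containing `q`), and no stable vertex of `Ĝ` is dominated. -/
theorem stmt10 (n : ℕ) (G : SimpleGraph (Fin n)) (hconn : G.Connected) :
    IsSplitPartition (hatG n G) (Set.range (Sum.inl : Fin n → HatIdx n G)) (hatCq n G) ∧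
    (∀ i j : Fin n, i ≠ j →
      ¬ ((hatG n G).neighborSet (Sum.inl i) ⊆ (hatG n G).neighborSet (Sum.inl j))) :=
  ⟨hatG_isSplitPartition, fun _ _ => hatG_neighborSet_inl_not_subset hconn.preconnected⟩
end
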